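/- arXiv:2009.11515 — 2 statements merged into one kernel-verified Lean document; each statement's English description precedes it below -/
import Mathlib

section
/- Let n ≥ 1, let μ₁ be the normalized Haar probability measure on the special unitary group SU(n), and let ζ ∈ ℂ satisfy ζⁿ = 1. Let Λ : SU(n) → Multiset ℂ send Q to the multiset of roots (with multiplicity) of the characteristic polynomial of Q over ℂ. Then the pushforward of μ₁ under Λ equals the pushforward of μ₁ under the map Q ↦ (Λ Q).map (ζ · ·). In particular (taking ζ = e^{2πi/n}), the joint eigenvalue distribution of Haar-distributed matrices from SU(n) has phases that are 2π/n-periodic. -/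
/-! The scalar matrix `ζ • 1` lies in `SU(n)` since `|ζ| = 1` and `det (ζ • 1) = ζ ^ n = 1`, and
multiplying a matrix by `ζ` multiplies its eigenvalues by `ζ`. Hence the second pushforward is
the first one composed with left translation by `ζ • 1`, under which Haar measure is invariant. -/

open MeasureTheory

noncomputable instance matrixMeasurableSpace {m n α : Type*} [MeasurableSpace α] :
    MeasurableSpace (Matrix m n α) :=
  (inferInstance : MeasurableSpace (m → n → α))

/-- The group structure on the special unitary group. -/
noncomputable instance specialUnitaryGroup.instGroup
    {m : Type*} [DecidableEq m] [Fintype m] {α : Type*} [CommRing α] [StarRing α] :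
    Group (Matrix.specialUnitaryGroup m α) :=
  { (inferInstance : Monoid (Matrix.specialUnitaryGroup m α)) with
    inv := fun x => ⟨star (x : Matrix m m α), by
      rcases Submonoid.mem_inf.mp x.2 with ⟨hu, hd⟩
      refine Submonoid.mem_inf.mpr ⟨Unitary.star_mem hu, ?_⟩
      rw [MonoidHom.mem_mker] at hd ⊢
      simpa [Matrix.star_eq_conjTranspose, Matrix.det_conjTranspose] using
        congrArg star hd⟩
    inv_mul_cancel := fun x => by
      have h : star (x : Matrix m m α) * (x : Matrix m m α) = 1 :=
        (Submonoid.mem_inf.mp x.2).1.1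
      exact Subtype.ext h }

/-- The multiset of eigenvalues (roots of the characteristic polynomial, with
multiplicity) of a complex matrix. -/
noncomputable def eigMultiset (n : ℕ) (A : Matrix (Fin n) (Fin n) ℂ) : Multiset ℂ :=
  A.charpoly.roots

open Polynomial

namespace Matrix

variable {m K : Type*} [Fintype m] [DecidableEq m]

theorem eval_charpoly_smul_mul [CommRing K] (A : Matrix m m K) (r x : K) :
    (r • A).charpoly.eval (r * x) = r ^ Fintype.card m * A.charpoly.eval x := by
  rw [eval_charpoly, eval_charpoly, ← det_smul, smul_sub, map_mul, scalar_apply, scalar_apply,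
    ← smul_eq_diagonal_mul]

theorem charpoly_smul [Field K] [Infinite K] (A : Matrix m m K) {r : K} (hr : r ≠ 0) :
    (r • A).charpoly = A.charpoly.scaleRoots r := by
  refine Polynomial.funext fun y => ?_
  obtain ⟨x, rfl⟩ : ∃ x, y = r * x := ⟨r⁻¹ * y, by field_simp⟩
  rw [eval_charpoly_smul_mul, scaleRoots_eval_mul, charpoly_natDegree_eq_dim]

theorem roots_charpoly_smul [Field K] [Infinite K] (A : Matrix m m K) {r : K} (hr : r ≠ 0) :
    (r • A).charpoly.roots = A.charpoly.roots.map (r * ·) := by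
  rw [charpoly_smul A hr, roots_scaleRoots _ hr.isUnit]

theorem smul_one_mem_specialUnitaryGroup {α : Type*} [CommRing α] [StarRing α] {ζ : α}
    (hζ : ζ ∈ unitary α) (hζm : ζ ^ Fintype.card m = 1) :
    ζ • (1 : Matrix m m α) ∈ specialUnitaryGroup m α := by
  refine mem_specialUnitaryGroup_iff.mpr ⟨mem_unitaryGroup_iff'.mpr ?_, by simp [hζm]⟩
  simp [smul_smul, Unitary.mul_star_self_of_mem hζ]

end Matrix

theorem Complex.mem_unitary_of_pow_eq_one {ζ : ℂ} {n : ℕ} (hζ : ζ ^ n = 1) (hn : n ≠ 0) :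
    ζ ∈ unitary ℂ := by
  rw [Unitary.mem_iff_star_mul_self, Complex.star_def, Complex.conj_mul',
    Complex.norm_eq_one_of_pow_eq_one hζ hn, Complex.ofReal_one, one_pow]

-- Makes left translations in `SU(n)` measurable, which `measure_preimage_mul` needs.
instance Matrix.borelSpace {m n α : Type*} [Countable m] [Countable n] [TopologicalSpace α]
    [MeasurableSpace α] [SecondCountableTopology α] [BorelSpace α] : BorelSpace (Matrix m n α) :=
  Pi.borelSpace

theorem eigMultiset_smul {n : ℕ} (A : Matrix (Fin n) (Fin n) ℂ) {r : ℂ} (hr : r ≠ 0) :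
    eigMultiset n (r • A) = (eigMultiset n A).map (r * ·) :=
  Matrix.roots_charpoly_smul A hr

theorem haar_specialUnitary_eigenvalues_root_of_unity_invariant_general (n : ℕ) (hn : 1 ≤ n)
    (μ : Measure (Matrix.specialUnitaryGroup (Fin n) ℂ))
    [μ.IsHaarMeasure]
    (ζ : ℂ) (hζ : ζ ^ n = 1) :
    ∀ S : Set (Multiset ℂ),
      μ ((fun Q => eigMultiset n (Q : Matrix (Fin n) (Fin n) ℂ)) ⁻¹' S) =
      μ ((fun Q => (eigMultiset n (Q : Matrix (Fin n) (Fin n) ℂ)).map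
          (fun z => ζ * z)) ⁻¹' S) := by
  intro S
  have hn₀ : n ≠ 0 := by omega
  let g : Matrix.specialUnitaryGroup (Fin n) ℂ :=
    ⟨ζ • 1, Matrix.smul_one_mem_specialUnitaryGroup
      (Complex.mem_unitary_of_pow_eq_one hζ hn₀) (by rwa [Fintype.card_fin])⟩
  have hg : (fun Q : Matrix.specialUnitaryGroup (Fin n) ℂ =>
      (eigMultiset n (Q : Matrix (Fin n) (Fin n) ℂ)).map (fun z => ζ * z)) =
      fun Q => eigMultiset n (g * Q : Matrix.specialUnitaryGroup (Fin n) ℂ) := by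
    funext Q
    rw [Submonoid.coe_mul, Matrix.smul_mul, Matrix.one_mul,
      eigMultiset_smul _ (ne_zero_pow hn₀ (hζ ▸ one_ne_zero))]
  rw [hg, ← measure_preimage_mul μ g]
  rfl

/-- The joint eigenvalue distribution of Haar-distributed matrices from `SU(n)` is
invariant under multiplication of all eigenvalues by a fixed `n`-th root of unity `ζ`:
the pushforward of the Haar probability measure under `Q ↦ Λ Q` equals its pushforward
under `Q ↦ (Λ Q).map (ζ * ·)`, as measured on every set of multisets.  In particular the
phases of the eigenvalue distribution are `2π/n`-periodic. -/
theorem haar_specialUnitary_eigenvalues_root_of_unity_invariant (n : ℕ) (hn : 1 ≤ n)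
    (μ : Measure (Matrix.specialUnitaryGroup (Fin n) ℂ))
    [μ.IsHaarMeasure] [IsProbabilityMeasure μ]
    (ζ : ℂ) (hζ : ζ ^ n = 1) :
    ∀ S : Set (Multiset ℂ),
      μ ((fun Q => eigMultiset n (Q : Matrix (Fin n) (Fin n) ℂ)) ⁻¹' S) =
      μ ((fun Q => (eigMultiset n (Q : Matrix (Fin n) (Fin n) ℂ)).map
          (fun z => ζ * z)) ⁻¹' S) :=
  haar_specialUnitary_eigenvalues_root_of_unity_invariant_general n hn μ ζ hζ
end

section
/- Let G = [[c, s], [−s, conj(c)]] be a 2×2 plane rotation with real sine (c ∈ ℂ, s ∈ ℝ, |c|² + s² = 1) and let D = diag(d₁, d₂) with |d₁| = |d₂| = 1. Then there exist a diagonal matrix D̃ = diag(d̃₁, d̃₂) with |d̃₁| = |d̃₂| = 1 and a plane rotation with real sine G̃ = [[c̃, s̃], [−s̃, conj(c̃)]] (c̃ ∈ ℂ, s̃ ∈ ℝ, |c̃|² + s̃² = 1) such that G·D = D̃·G̃. -/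
open Matrix

theorem RCLike.mem_unitary_of_norm_eq_one {𝕜 : Type*} [RCLike 𝕜] {z : 𝕜} (hz : ‖z‖ = 1) :
    z ∈ unitary 𝕜 := by
  refine Unitary.mem_iff.2 ⟨?_, ?_⟩ <;>
    simp only [RCLike.star_def, RCLike.conj_mul, RCLike.mul_conj, hz, RCLike.ofReal_one, one_pow]

def planeRot {R : Type*} [CommRing R] [StarRing R] (c s : R) : Matrix (Fin 2) (Fin 2) R :=
  !![c, s; -s, star c]

/-- Swapping the diagonal entries leaves the off-diagonal entries `s d₂`, `-s d₁` in place;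
the diagonal of the rotation absorbs the phase `d₁ / d₂ = d₁ * star d₂`. -/
theorem planeRot_mul_diagonal {R : Type*} [CommRing R] [StarRing R] {d₁ d₂ : R}
    (hd₁ : d₁ ∈ unitary R) (hd₂ : d₂ ∈ unitary R) (c s : R) :
    planeRot c s * diagonal ![d₁, d₂] = diagonal ![d₂, d₁] * planeRot (c * d₁ * star d₂) s := by
  have e₁ := Unitary.mul_star_self_of_mem hd₁
  have e₂ := Unitary.mul_star_self_of_mem hd₂
  simp only [planeRot, diagonal_vec2, mul_fin_two, star_mul', star_star]
  congrm !![?_, ?_; ?_, ?_]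
  · linear_combination -(c * d₁) * e₂
  · ring
  · ring
  · linear_combination -(star c * d₂) * e₁

/-- A plane rotation with real sine times a unitary diagonal matrix can be refactored,
swapping the order: `G D = D̃ G̃` with `D̃` unitary diagonal and `G̃` a plane rotation
with real sine. -/
theorem planeRot_mul_diagonal_swap (c : ℂ) (s : ℝ)
    (h : ‖c‖ ^ 2 + s ^ 2 = 1)
    (d₁ d₂ : ℂ) (h₁ : ‖d₁‖ = 1) (h₂ : ‖d₂‖ = 1) :
    ∃ (dt₁ dt₂ ct : ℂ) (st : ℝ),
      ‖dt₁‖ = 1 ∧ ‖dt₂‖ = 1 ∧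
      ‖ct‖ ^ 2 + st ^ 2 = 1 ∧
      !![c, (s : ℂ); (-s : ℂ), starRingEnd ℂ c] * Matrix.diagonal ![d₁, d₂] =
        Matrix.diagonal ![dt₁, dt₂] * !![ct, (st : ℂ); (-st : ℂ), starRingEnd ℂ ct] := by
  refine ⟨d₂, d₁, c * d₁ * star d₂, s, h₂, h₁, ?_, ?_⟩
  · rwa [norm_mul, norm_mul, norm_star, h₁, h₂, mul_one, mul_one]
  · exact planeRot_mul_diagonal (RCLike.mem_unitary_of_norm_eq_one h₁)
      (RCLike.mem_unitary_of_norm_eq_one h₂) c s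
end
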